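/- arXiv:0711.4144 — 2 statements merged into one kernel-verified Lean document; each statement's English description precedes it below -/
import Mathlib

section
/- For every k ≥ 1, the polynomial P_{k-1} has no real root that is ≤ 0; moreover, every complex root β of P_{k-1} satisfies: β is a positive real number, or |β| = 1. In particular the only real roots of P_{k-1} are the unique root α ∈ (0,1) and its reciprocal 1/α. -/
/-!
`P = Pm1 k` has degree `4k` and is palindromic: `x ^ (4k) P(1/x) = P(x)`. As `P(0) = 1` and
`P(1) = 1 - 2k`, it has a root `α ∈ (0, 1)`, hence also the root `1/α`. For `w = e^{iθ}`
palindromy makes `w^(-2k) P(w)` real, and the closed form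
`(x⁴ - 1) P(x) = x^(4k+1) (x³ - x² - x - 1) + (x³ + x² + x - 1)` turns it into
`sin 2θ · w^(-2k) P(w) = sin (2k+2)θ - sin (2k+1)θ - sin 2kθ - sin (2k-1)θ`,
which equals `-2 (-1)^m cos (θ/2)` at `θ = (2m+1)π/(4k+1)`. The resulting sign changes give
`2k - 1` roots on the open upper half of the unit circle and, by conjugation, `2k - 1` on the lower
half. With `α` and `1/α` these are `4k` distinct roots, hence all of them.
-/

open Polynomial Finset

/-- For `k ≥ 1`, the polynomial `P_{k-1}(q) = 1 + ∑_{l=1}^{k} (q⁴−q³−q²−q)·q^{4(l−1)}`,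
here `Pm1 k` denotes `P_{k-1}`. -/
noncomputable def Pm1 (k : ℕ) : Polynomial ℤ :=
  1 + ∑ l ∈ Finset.range k, (X ^ 4 - X ^ 3 - X ^ 2 - X) * X ^ (4 * l)

section Evaluation

variable {R : Type*} [CommRing R]

lemma aeval_Pm1 (k : ℕ) (x : R) :
    aeval x (Pm1 k) = 1 + ∑ l ∈ range k, (x ^ 4 - x ^ 3 - x ^ 2 - x) * x ^ (4 * l) := by
  simp [Pm1, map_sum]

lemma aeval_Pm1_succ (k : ℕ) (x : R) :
    aeval x (Pm1 (k + 1)) = aeval x (Pm1 k) + (x ^ 4 - x ^ 3 - x ^ 2 - x) * x ^ (4 * k) := by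
  rw [aeval_Pm1, aeval_Pm1, sum_range_succ, add_assoc]

lemma aeval_Pm1_zero (k : ℕ) : aeval (0 : R) (Pm1 k) = 1 := by
  simp [aeval_Pm1]

lemma aeval_Pm1_one (k : ℕ) : aeval (1 : R) (Pm1 k) = 1 - 2 * k := by
  simp [aeval_Pm1]
  ring

lemma aeval_Pm1_neg_one (k : ℕ) : aeval (-1 : R) (Pm1 k) = 1 + 2 * k := by
  have hterm (l : ℕ) : ((-1 : R) ^ 4 - (-1) ^ 3 - (-1) ^ 2 - -1) * (-1) ^ (4 * l) = 2 := by
    rw [pow_mul]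
    norm_num
  simp only [aeval_Pm1, hterm, sum_const, card_range, nsmul_eq_mul]
  ring

lemma sub_one_mul_aeval_Pm1 (k : ℕ) (x : R) :
    (x ^ 4 - 1) * aeval x (Pm1 k) =
      x ^ (4 * k + 1) * (x ^ 3 - x ^ 2 - x - 1) + (x ^ 3 + x ^ 2 + x - 1) := by
  induction k with
  | zero => simp [aeval_Pm1]; ring
  | succ k ih => rw [aeval_Pm1_succ]; linear_combination ih

end Evaluation

lemma pow_mul_aeval_inv_Pm1 {K : Type*} [Field K] (k : ℕ) {x : K} (hx : x ≠ 0) :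
    x ^ (4 * k) * aeval x⁻¹ (Pm1 k) = aeval x (Pm1 k) := by
  induction k with
  | zero => simp [aeval_Pm1]
  | succ k ih =>
    set y := x⁻¹
    have hxy : x * y = 1 := mul_inv_cancel₀ hx
    have hxyk : x ^ (4 * k) * y ^ (4 * k) = 1 := by rw [← mul_pow, hxy, one_pow]
    have hflip : x ^ (4 * (k + 1)) * ((y ^ 4 - y ^ 3 - y ^ 2 - y) * y ^ (4 * k)) =
        1 - x - x ^ 2 - x ^ 3 :=
      calc _ = x ^ (4 * k) * y ^ (4 * k) *
            ((x * y) ^ 4 - x * (x * y) ^ 3 - x ^ 2 * (x * y) ^ 2 - x ^ 3 * (x * y)) := by ring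
        _ = 1 - x - x ^ 2 - x ^ 3 := by rw [hxyk, hxy]; ring
    rw [aeval_Pm1_succ, aeval_Pm1_succ]
    linear_combination x ^ 4 * ih + hflip + sub_one_mul_aeval_Pm1 k x

lemma aeval_inv_Pm1_eq_zero {K : Type*} [Field K] {k : ℕ} {x : K} (hx : x ≠ 0)
    (h : aeval x (Pm1 k) = 0) : aeval x⁻¹ (Pm1 k) = 0 := by
  rw [← pow_mul_aeval_inv_Pm1 k hx] at h
  exact (mul_eq_zero.mp h).resolve_left (pow_ne_zero _ hx)

lemma natDegree_Pm1_le (k : ℕ) : (Pm1 k).natDegree ≤ 4 * k := by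
  unfold Pm1
  refine (natDegree_add_le _ _).trans (max_le (by simp) (natDegree_sum_le_of_forall_le _ _ ?_))
  intro l hl
  have hlk : l < k := mem_range.mp hl
  have hdeg : (X ^ 4 - X ^ 3 - X ^ 2 - X : ℤ[X]).natDegree ≤ 4 := by compute_degree
  refine natDegree_mul_le.trans ?_
  rw [natDegree_X_pow]
  omega

lemma Pm1_map_ne_zero {R : Type*} [CommRing R] [Nontrivial R] (k : ℕ) :
    (Pm1 k).map (algebraMap ℤ R) ≠ 0 := by
  intro h
  have := aeval_Pm1_zero (R := R) k
  rw [aeval_def, eval₂_eq_eval_map, h] at this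
  simp at this

lemma exists_root_Pm1_mem_Ioo {k : ℕ} (hk : 1 ≤ k) :
    ∃ α ∈ Set.Ioo (0 : ℝ) 1, aeval α (Pm1 k) = 0 := by
  have hsign : (0 : ℝ) ∈ Set.Ioo (aeval (1 : ℝ) (Pm1 k)) (aeval (0 : ℝ) (Pm1 k)) := by
    rw [aeval_Pm1_zero, aeval_Pm1_one]
    constructor
    · have : (1 : ℝ) ≤ k := by exact_mod_cast hk
      linarith
    · norm_num
  exact intermediate_value_Ioo' zero_le_one (Polynomial.continuous_aeval _).continuousOn hsign

lemma Polynomial.mem_of_isRoot_of_natDegree_le_card {R : Type*} [CommRing R] [IsDomain R]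
    [DecidableEq R] {p : R[X]} (hp : p ≠ 0) {s : Finset R} (hs : ∀ z ∈ s, p.IsRoot z)
    (hcard : p.natDegree ≤ s.card) {z : R} (hz : p.IsRoot z) : z ∈ s := by
  have hsub : s ⊆ p.roots.toFinset := fun x hx => by
    rw [Multiset.mem_toFinset, mem_roots hp]
    exact hs x hx
  have hle : p.roots.toFinset.card ≤ s.card :=
    (Multiset.toFinset_card_le _).trans ((card_roots' p).trans hcard)
  rw [eq_of_subset_of_card_le hsub hle, Multiset.mem_toFinset, mem_roots hp]
  exact hz

lemma exists_mem_Ioo_eq_zero_of_mul_neg {f : ℝ → ℝ} (hf : Continuous f) {a b : ℝ} (hab : a ≤ b)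
    (h : f a * f b < 0) : ∃ c ∈ Set.Ioo a b, f c = 0 := by
  rcases mul_neg_iff.mp h with ⟨ha, hb⟩ | ⟨ha, hb⟩
  · exact intermediate_value_Ioo' hab hf.continuousOn ⟨hb, ha⟩
  · exact intermediate_value_Ioo hab hf.continuousOn ⟨ha, hb⟩

section Circle

open Complex ComplexConjugate

lemma Complex.conj_aeval_int (p : ℤ[X]) (z : ℂ) : conj (aeval z p) = aeval (conj z) p :=
  (aeval_algHom_apply (starRingEnd ℂ).toIntAlgHom z p).symm

lemma Complex.ofReal_sin_nat_mul (m : ℕ) (θ : ℝ) :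
    (Real.sin (m * θ) : ℂ) = ((exp (θ * I))⁻¹ ^ m - exp (θ * I) ^ m) * I / 2 := by
  rw [ofReal_sin, sin, ← exp_nat_mul, ← exp_neg, ← exp_nat_mul]
  push_cast
  ring_nf

lemma Complex.injOn_exp_ofReal_mul_I : Set.InjOn (fun θ : ℝ => exp (θ * I)) (Set.Icc 0 Real.pi) :=
  fun θ hθ θ' hθ' h => Real.injOn_cos hθ hθ' <| by
    simpa only [exp_ofReal_mul_I_re] using congrArg re h

noncomputable def circleValue (k : ℕ) (θ : ℝ) : ℝ :=
  ((exp (θ * I))⁻¹ ^ (2 * k) * aeval (exp (θ * I)) (Pm1 k)).re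

lemma ofReal_circleValue (k : ℕ) (θ : ℝ) :
    (circleValue k θ : ℂ) = (exp (θ * I))⁻¹ ^ (2 * k) * aeval (exp (θ * I)) (Pm1 k) := by
  rw [circleValue, ← conj_eq_iff_re, map_mul, map_pow, map_inv₀, conj_aeval_int,
    ← inv_eq_conj (norm_exp_ofReal_mul_I θ), inv_inv]
  set w := exp (θ * I)
  have hw : w ≠ 0 := exp_ne_zero _
  rw [← pow_mul_aeval_inv_Pm1 k hw, ← mul_assoc, inv_pow, ← div_eq_inv_mul,
    show 4 * k = 2 * k + 2 * k by ring, pow_add, mul_div_cancel_left₀ _ (pow_ne_zero _ hw)]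

lemma continuous_circleValue (k : ℕ) : Continuous (circleValue k) := by
  unfold circleValue
  fun_prop (disch := exact fun _ => exp_ne_zero _)

lemma aeval_exp_eq_zero_of_circleValue_eq_zero {k : ℕ} {θ : ℝ} (h : circleValue k θ = 0) :
    aeval (exp (θ * I)) (Pm1 k) = 0 := by
  have := ofReal_circleValue k θ
  rw [h, ofReal_zero, eq_comm] at this
  simpa [exp_ne_zero] using this

lemma circleValue_pi (k : ℕ) : circleValue k Real.pi = 1 + 2 * k := by
  rw [circleValue, exp_pi_mul_I, aeval_Pm1_neg_one, inv_neg, inv_one, pow_mul]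
  norm_num

lemma sin_two_mul_mul_circleValue (n : ℕ) (θ : ℝ) :
    Real.sin (2 * θ) * circleValue (n + 1) θ =
      Real.sin ((2 * n + 4) * θ) - Real.sin ((2 * n + 3) * θ)
        - Real.sin ((2 * n + 2) * θ) - Real.sin ((2 * n + 1) * θ) := by
  have hsin (m : ℕ) := ofReal_sin_nat_mul m θ
  have s2 := hsin 2
  have s4 := hsin (2 * n + 4)
  have s3 := hsin (2 * n + 3)
  have s2' := hsin (2 * n + 2)
  have s1 := hsin (2 * n + 1)
  simp only [Nat.cast_add, Nat.cast_mul, Nat.cast_ofNat, Nat.cast_one] at s2 s4 s3 s2' s1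
  apply ofReal_injective
  rw [ofReal_mul, ofReal_circleValue, ofReal_sub, ofReal_sub, ofReal_sub, s2, s4, s3, s2', s1]
  have hQ := sub_one_mul_aeval_Pm1 (n + 1) (exp (θ * I))
  set w := exp (θ * I)
  have hw : w ≠ 0 := exp_ne_zero _
  simp only [inv_pow]
  field_simp
  linear_combination (-(w ^ (2 * n + 4) * w ^ (2 * n + 3) * w ^ (2 * n + 2) * w ^ (2 * n + 1))) * hQ

end Circle

-- Indexed by `n = k - 1`, so that `4 * n + 5 = 4 * k + 1`.
open Real in
noncomputable def samplePoint (n m : ℕ) : ℝ := (2 * m + 1) * π / (4 * n + 5)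

section SamplePoint

open Real

variable (n : ℕ)

lemma samplePoint_pos (m : ℕ) : 0 < samplePoint n m := by
  unfold samplePoint
  positivity

lemma samplePoint_strictMono : StrictMono (samplePoint n) := fun m m' h => by
  unfold samplePoint
  gcongr

lemma samplePoint_two_mul_add_two : samplePoint n (2 * n + 2) = π := by
  unfold samplePoint
  push_cast
  field_simp
  ring

lemma samplePoint_lt_pi {m : ℕ} (hm : m ≤ 2 * n + 1) : samplePoint n m < π :=
  samplePoint_two_mul_add_two n ▸ samplePoint_strictMono n (by omega)

lemma sin_two_mul_samplePoint_pos {m : ℕ} (hm : m ≤ n) : 0 < sin (2 * samplePoint n m) := by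
  refine sin_pos_of_pos_of_lt_pi (by linarith [samplePoint_pos n m]) ?_
  have : (m : ℝ) ≤ n := by exact_mod_cast hm
  rw [samplePoint, ← mul_div_assoc, div_lt_iff₀ (by positivity)]
  nlinarith [pi_pos]

lemma sin_two_mul_samplePoint_neg {m : ℕ} (hnm : n < m) (hm : m ≤ 2 * n + 1) :
    sin (2 * samplePoint n m) < 0 := by
  have h1 : (n : ℝ) + 1 ≤ m := by exact_mod_cast hnm
  have h2 : (m : ℝ) ≤ 2 * n + 1 := by exact_mod_cast hm
  have hpos : 0 < sin (2 * samplePoint n m - π) := by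
    apply sin_pos_of_pos_of_lt_pi
    · rw [samplePoint, sub_pos, ← mul_div_assoc, lt_div_iff₀ (by positivity)]
      nlinarith [pi_pos]
    · rw [samplePoint, sub_lt_iff_lt_add, ← mul_div_assoc, div_lt_iff₀ (by positivity)]
      nlinarith [pi_pos]
  rw [sin_sub_pi] at hpos
  linarith

lemma sin_two_mul_mul_circleValue_samplePoint (m : ℕ) :
    sin (2 * samplePoint n m) * circleValue (n + 1) (samplePoint n m) =
      -2 * (-1) ^ m * cos (samplePoint n m / 2) := by
  set t := samplePoint n m
  set h := (4 * n + 5) * t / 2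
  have hh : h = m * π + π / 2 := by
    simp only [h, t, samplePoint]
    field_simp
  have hcos : cos h = 0 := by rw [hh, cos_add_pi_div_two, sin_nat_mul_pi, neg_zero]
  have hsin : sin h = (-1) ^ m := by rw [hh, sin_add_pi_div_two, cos_nat_mul_pi]
  rw [sin_two_mul_mul_circleValue,
    show (2 * n + 4 : ℝ) * t = h + 3 * (t / 2) by ring,
    show (2 * n + 3 : ℝ) * t = h + t / 2 by ring,
    show (2 * n + 2 : ℝ) * t = h - t / 2 by ring,
    show (2 * n + 1 : ℝ) * t = h - 3 * (t / 2) by ring]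
  simp only [sin_add, sin_sub, hcos, hsin]
  ring

lemma cos_samplePoint_div_two_pos {m : ℕ} (hm : m ≤ 2 * n + 1) :
    0 < cos (samplePoint n m / 2) := by
  apply cos_pos_of_mem_Ioo
  constructor <;> linarith [samplePoint_pos n m, samplePoint_lt_pi n hm]

-- Between the sample points `n` and `n + 1` the factor `sin (2 * θ)` changes sign as well.
lemma circleValue_samplePoint_mul_neg {m : ℕ} (hm : m ≤ 2 * n + 1) (hmn : m ≠ n) :
    circleValue (n + 1) (samplePoint n m) * circleValue (n + 1) (samplePoint n (m + 1)) < 0 := by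
  have hsq : ((-1 : ℝ) ^ m) ^ 2 = 1 := by rw [← pow_mul, pow_mul', neg_one_sq, one_pow]
  rcases hm.lt_or_eq with hlt | rfl
  · have hsin : 0 < sin (2 * samplePoint n m) * sin (2 * samplePoint n (m + 1)) := by
      rcases hmn.lt_or_gt with hmn | hmn
      · exact mul_pos (sin_two_mul_samplePoint_pos n hmn.le) (sin_two_mul_samplePoint_pos n hmn)
      · exact mul_pos_of_neg_of_neg (sin_two_mul_samplePoint_neg n hmn hm)
          (sin_two_mul_samplePoint_neg n (by omega) hlt)
    have hprod : sin (2 * samplePoint n m) * sin (2 * samplePoint n (m + 1)) *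
        (circleValue (n + 1) (samplePoint n m) * circleValue (n + 1) (samplePoint n (m + 1))) =
        -(4 * (cos (samplePoint n m / 2) * cos (samplePoint n (m + 1) / 2))) := by
      rw [mul_mul_mul_comm, sin_two_mul_mul_circleValue_samplePoint,
        sin_two_mul_mul_circleValue_samplePoint, pow_succ]
      linear_combination (-4 * cos (samplePoint n m / 2) * cos (samplePoint n (m + 1) / 2)) * hsq
    refine neg_of_mul_neg_right (hprod ▸ neg_neg_of_pos ?_) hsin.le
    exact mul_pos four_pos (mul_pos (cos_samplePoint_div_two_pos n hm)
      (cos_samplePoint_div_two_pos n hlt))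
  · have hsin := sin_two_mul_samplePoint_neg n (m := 2 * n + 1) (by omega) le_rfl
    have hval := sin_two_mul_mul_circleValue_samplePoint n (2 * n + 1)
    rw [pow_succ, pow_mul, neg_one_sq, one_pow] at hval
    have hneg : circleValue (n + 1) (samplePoint n (2 * n + 1)) < 0 := by
      refine neg_of_mul_pos_right ?_ hsin.le
      rw [hval]
      linarith [cos_samplePoint_div_two_pos n le_rfl]
    rw [samplePoint_two_mul_add_two, circleValue_pi]
    exact mul_neg_of_neg_of_pos hneg (by positivity)

end SamplePoint

section Roots

open Complex ComplexConjugate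

lemma exists_roots_Pm1_im_pos (n : ℕ) :
    ∃ A : Finset ℂ, A.card = 2 * n + 1 ∧
      ∀ z ∈ A, 0 < z.im ∧ ‖z‖ = 1 ∧ aeval z (Pm1 (n + 1)) = 0 := by
  set M := (range (2 * n + 2)).erase n
  have hroot : ∀ m ∈ M, ∃ θ ∈ Set.Ioo (samplePoint n m) (samplePoint n (m + 1)),
      circleValue (n + 1) θ = 0 := by
    intro m hm
    obtain ⟨hmn, hm⟩ := mem_erase.mp hm
    exact exists_mem_Ioo_eq_zero_of_mul_neg (continuous_circleValue _)
      (samplePoint_strictMono n m.lt_succ_self).le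
      (circleValue_samplePoint_mul_neg n (by rw [mem_range] at hm; omega) hmn)
  choose! θ hθ hθ0 using hroot
  have hθpi : ∀ m ∈ M, θ m ∈ Set.Ioo 0 Real.pi := by
    intro m hm
    have hm' : m + 1 ≤ 2 * n + 2 := by rw [mem_erase, mem_range] at hm; omega
    refine ⟨(samplePoint_pos n m).trans (hθ m hm).1, (hθ m hm).2.trans_le ?_⟩
    exact samplePoint_two_mul_add_two n ▸ (samplePoint_strictMono n).monotone hm'
  have hmono : StrictMonoOn θ M := fun m hm m' hm' h =>
    ((hθ m hm).2.trans_le ((samplePoint_strictMono n).monotone h)).trans (hθ m' hm').1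
  refine ⟨M.image fun m => exp (θ m * I), ?_, ?_⟩
  · rw [card_image_of_injOn, card_erase_of_mem (mem_range.mpr (by omega)), card_range]
    · omega
    exact injOn_exp_ofReal_mul_I.comp hmono.injOn fun m hm => Set.Ioo_subset_Icc_self (hθpi m hm)
  · simp only [mem_image]
    rintro _ ⟨m, hm, rfl⟩
    refine ⟨?_, norm_exp_ofReal_mul_I _, aeval_exp_eq_zero_of_circleValue_eq_zero (hθ0 m hm)⟩
    rw [exp_ofReal_mul_I_im]
    exact Real.sin_pos_of_pos_of_lt_pi (hθpi m hm).1 (hθpi m hm).2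

lemma Complex.card_union_image_conj {A : Finset ℂ} (hA : ∀ z ∈ A, 0 < z.im) :
    (A ∪ A.image conj).card = 2 * A.card := by
  rw [card_union_of_disjoint, card_image_of_injective _ (RingHom.injective _), two_mul]
  rw [disjoint_left]
  intro z hz hz'
  obtain ⟨w, hw, rfl⟩ := mem_image.mp hz'
  have := hA _ hz
  rw [conj_im] at this
  linarith [hA w hw]

lemma Complex.card_union_pair_ofReal {B : Finset ℂ} (hB : ∀ z ∈ B, z.im ≠ 0) {a b : ℝ}
    (hab : a ≠ b) : (B ∪ {(a : ℂ), (b : ℂ)}).card = B.card + 2 := by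
  rw [card_union_of_disjoint, card_pair (ofReal_injective.ne hab)]
  rw [disjoint_right]
  intro z hz hzB
  rcases mem_insert.mp hz with rfl | hz
  · exact hB _ hzB (ofReal_im a)
  · rw [mem_singleton.mp hz] at hzB
    exact hB _ hzB (ofReal_im b)

lemma exists_nonreal_roots_Pm1 (n : ℕ) :
    ∃ B : Finset ℂ, B.card = 4 * n + 2 ∧
      ∀ z ∈ B, z.im ≠ 0 ∧ ‖z‖ = 1 ∧ aeval z (Pm1 (n + 1)) = 0 := by
  obtain ⟨A, hAcard, hA⟩ := exists_roots_Pm1_im_pos n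
  refine ⟨A ∪ A.image conj, by rw [card_union_image_conj fun z hz => (hA z hz).1, hAcard]; ring,
    fun z hz => ?_⟩
  rcases mem_union.mp hz with hz | hz
  · exact ⟨(hA z hz).1.ne', (hA z hz).2⟩
  · obtain ⟨w, hw, rfl⟩ := mem_image.mp hz
    obtain ⟨him, hnorm, hroot⟩ := hA w hw
    refine ⟨by rw [conj_im]; exact (neg_neg_of_pos him).ne, by rwa [norm_conj], ?_⟩
    rw [← conj_aeval_int, hroot, map_zero]

lemma eq_or_eq_inv_or_norm_eq_one_of_aeval_Pm1_eq_zero (n : ℕ) {α : ℝ} (hα : α ∈ Set.Ioo 0 1)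
    (hαroot : aeval α (Pm1 (n + 1)) = 0) {β : ℂ} (hβ : aeval β (Pm1 (n + 1)) = 0) :
    β = α ∨ β = (α⁻¹ : ℝ) ∨ β.im ≠ 0 ∧ ‖β‖ = 1 := by
  classical
  obtain ⟨B, hBcard, hB⟩ := exists_nonreal_roots_Pm1 n
  have hαinv := aeval_inv_Pm1_eq_zero hα.1.ne' hαroot
  have hαlt : α < α⁻¹ := hα.2.trans (one_lt_inv₀ hα.1 |>.mpr hα.2)
  set p := (Pm1 (n + 1)).map (algebraMap ℤ ℂ)
  have hisRoot (z : ℂ) : p.IsRoot z ↔ aeval z (Pm1 (n + 1)) = 0 := by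
    rw [IsRoot.def, aeval_def, eval₂_eq_eval_map]
  have hofReal (x : ℝ) : aeval (x : ℂ) (Pm1 (n + 1)) = aeval x (Pm1 (n + 1)) :=
    aeval_algebraMap_apply ℂ x _
  have hmem := p.mem_of_isRoot_of_natDegree_le_card (Pm1_map_ne_zero _)
    (s := B ∪ {(α : ℂ), ((α⁻¹ : ℝ) : ℂ)}) ?_ ?_ ((hisRoot β).2 hβ)
  · rcases mem_union.mp hmem with h | h
    · exact Or.inr (Or.inr ⟨(hB β h).1, (hB β h).2.1⟩)
    · rcases mem_insert.mp h with h | h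
      · exact Or.inl h
      · exact Or.inr (Or.inl (mem_singleton.mp h))
  · intro z hz
    rw [hisRoot]
    rcases mem_union.mp hz with hz | hz
    · exact (hB z hz).2.2
    · rcases mem_insert.mp hz with rfl | hz
      · rw [hofReal, hαroot, ofReal_zero]
      · rw [mem_singleton.mp hz, hofReal, hαinv, ofReal_zero]
  · rw [card_union_pair_ofReal (fun z hz => (hB z hz).1) hαlt.ne, hBcard]
    exact natDegree_map_le.trans (natDegree_Pm1_le _)

end Roots

/-- For `k ≥ 1`: `P_{k-1}` has no real root `≤ 0`; every complex root is
a positive real or has absolute value `1`; and the only real roots are the unique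
`α ∈ (0,1)` and its reciprocal `1/α`. -/
theorem stmt_5 (k : ℕ) (hk : 1 ≤ k) :
    (∀ x : ℝ, x ≤ 0 → Polynomial.aeval x (Pm1 k) ≠ 0) ∧
    (∀ β : ℂ, Polynomial.aeval β (Pm1 k) = 0 →
      (∃ r : ℝ, 0 < r ∧ β = (r : ℂ)) ∨ ‖β‖ = 1) ∧
    (∃ α : ℝ, α ∈ Set.Ioo (0 : ℝ) 1 ∧ Polynomial.aeval α (Pm1 k) = 0 ∧
      ∀ x : ℝ, Polynomial.aeval x (Pm1 k) = 0 → x = α ∨ x = 1 / α) := by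
  obtain ⟨α, hα, hαroot⟩ := exists_root_Pm1_mem_Ioo hk
  obtain ⟨n, rfl⟩ : ∃ n, k = n + 1 := ⟨k - 1, by omega⟩
  have hroots {β : ℂ} (hβ : aeval β (Pm1 (n + 1)) = 0) :=
    eq_or_eq_inv_or_norm_eq_one_of_aeval_Pm1_eq_zero n hα hαroot hβ
  have hreal (x : ℝ) (hx : aeval x (Pm1 (n + 1)) = 0) : x = α ∨ x = α⁻¹ := by
    have hxC : aeval (x : ℂ) (Pm1 (n + 1)) = 0 := by
      rw [← Complex.ofReal_zero, ← hx]
      exact aeval_algebraMap_apply ℂ x _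
    rcases hroots hxC with h | h | ⟨him, -⟩
    · exact Or.inl (Complex.ofReal_injective h)
    · exact Or.inr (Complex.ofReal_injective h)
    · exact absurd (Complex.ofReal_im x) him
  refine ⟨fun x hx hroot => ?_, fun β hβ => ?_, α, hα, hαroot, fun x hx => by
    simpa only [one_div] using hreal x hx⟩
  · rcases hreal x hroot with rfl | rfl
    · linarith [hα.1]
    · linarith [inv_pos.mpr hα.1]
  · rcases hroots hβ with h | h | ⟨-, h⟩
    · exact Or.inl ⟨α, hα.1, h⟩
    · exact Or.inl ⟨α⁻¹, inv_pos.mpr hα.1, h⟩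
    · exact Or.inr h
end

section
/- For every k ≥ 1: if k ≢ 2 (mod 3), then no complex root of P_{k-1} is a root of unity; if k ≡ 2 (mod 3), then the only complex roots of P_{k-1} that are roots of unity are the two primitive cube roots of unity e^{±2πi/3}. -/
open Polynomial

/-!
If a root of unity `β` of order `n` is a root of `P_{k-1}`, then `Φₙ ∣ P_{k-1}` in `ℤ[X]`.
Modulo 2, `P_{k-1}` becomes `1 + X + ⋯ + X^{4k}`, a divisor of the separable polynomial
`X^{4k+1} - 1`, while `Φₙ` becomes `Φₘ^{φ(2^e)}` for `n = 2^e m` with `m` odd. Squarefreeness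
forces `e ≤ 1`, and then `m ∣ 4k+1`, so `(β^{4k+1})² = 1`. Evaluating
`(X⁴ - 1) P_{k-1} = X^{4k+1} (X³ - X² - X - 1) + (X³ + X² + X - 1)` at `β` with `β^{4k+1} = ±1`
leaves `β³ = 1` or `β (β + 1) = 0`, and `P_{k-1}(±1) = 1 ∓ 2k ≠ 0` rules out `β = ±1`.
-/

theorem dvd_of_cyclotomic_dvd_X_pow_sub_one {K : Type*} [Field K] {m M : ℕ} [NeZero (m : K)]
    (h : cyclotomic m K ∣ X ^ M - 1) : m ∣ M := by
  obtain ⟨ζ, hζ⟩ := HasEnoughRootsOfUnity.exists_primitiveRoot (AlgebraicClosure K) m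
  have hroot : (cyclotomic m (AlgebraicClosure K)).IsRoot ζ :=
    hζ.isRoot_cyclotomic (NeZero.pos_of_neZero_natCast K)
  have hdvd := map_dvd (mapRingHom (algebraMap K (AlgebraicClosure K))) h
  simp only [coe_mapRingHom, map_cyclotomic, Polynomial.map_sub, Polynomial.map_pow,
    Polynomial.map_X, Polynomial.map_one] at hdvd
  rw [← hζ.pow_eq_one_iff_dvd, ← sub_eq_zero]
  simpa using hroot.dvd hdvd

theorem dvd_two_mul_of_cyclotomic_zmod_two_dvd_X_pow_sub_one {n M : ℕ} (hn : n ≠ 0) (hM : Odd M)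
    (h : cyclotomic n (ZMod 2) ∣ X ^ M - 1) : n ∣ 2 * M := by
  obtain ⟨e, m, hm, rfl⟩ := Nat.exists_eq_two_pow_mul_odd hn
  have : NeZero (m : ZMod 2) := ⟨by simp [ZMod.natCast_eq_one_iff_odd.mpr hm]⟩
  rcases e with _ | f
  · simpa using (dvd_of_cyclotomic_dvd_X_pow_sub_one (by simpa using h)).mul_left 2
  have hsq : Squarefree (X ^ M - 1 : (ZMod 2)[X]) :=
    (X_pow_sub_one_separable_iff.mpr (by simp [ZMod.natCast_eq_one_iff_odd.mpr hM])).squarefree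
  have hexp : 2 ^ f.succ - 2 ^ (f.succ - 1) = 2 ^ f := by rw [Nat.succ_sub_one, pow_succ]; omega
  rw [cyclotomic_mul_prime_pow_eq (ZMod 2) hm.not_two_dvd_nat f.succ_pos, hexp] at h
  obtain rfl : f = 0 := by
    simpa using (hsq.squarefree_of_dvd h).eq_zero_or_one_of_pow_of_not_isUnit
      (not_isUnit_of_degree_pos _ (degree_cyclotomic_pos m _ hm.pos))
  simpa using mul_dvd_mul_left 2 (dvd_of_cyclotomic_dvd_X_pow_sub_one (by simpa using h))

theorem cyclotomic_orderOf_dvd_of_aeval_eq_zero {K : Type*} [Field K] [CharZero K] {β : K}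
    (hβ : IsOfFinOrder β) {p : ℤ[X]} (hp : aeval β p = 0) : cyclotomic (orderOf β) ℤ ∣ p := by
  rw [cyclotomic_eq_minpoly (IsPrimitiveRoot.orderOf β) hβ.orderOf_pos]
  exact minpoly.isIntegrallyClosed_dvd ((IsPrimitiveRoot.orderOf β).isIntegral hβ.orderOf_pos) hp

theorem IsPrimitiveRoot.eq_or_eq_sq_of_three {R : Type*} [CommRing R] [IsDomain R] {ω β : R}
    (hω : IsPrimitiveRoot ω 3) (hβ : IsPrimitiveRoot β 3) : β = ω ∨ β = ω ^ 2 := by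
  have hω3 := hω.geom_sum_eq_zero (by norm_num)
  have hβ3 := hβ.geom_sum_eq_zero (by norm_num)
  simp only [Finset.sum_range_succ, Finset.range_zero, Finset.sum_empty, pow_zero, pow_one,
    zero_add] at hω3 hβ3
  have : (β - ω) * (β - ω ^ 2) = 0 := by
    linear_combination hβ3 - β * hω3 + hω.pow_eq_one
  simpa [sub_eq_zero] using this

theorem X_pow_four_sub_one_mul_Pm1 (k : ℕ) :
    (X ^ 4 - 1) * Pm1 k = X ^ (4 * k + 1) * (X ^ 3 - X ^ 2 - X - 1) + (X ^ 3 + X ^ 2 + X - 1) := by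
  induction k with
  | zero => simp only [Pm1, Finset.range_zero, Finset.sum_empty]; ring
  | succ k ih =>
    rw [Pm1, Finset.sum_range_succ, ← add_assoc, ← Pm1, mul_add, ih]
    ring

theorem pow_four_sub_one_mul_aeval_Pm1 {R : Type*} [CommRing R] (k : ℕ) (x : R) :
    (x ^ 4 - 1) * aeval x (Pm1 k) =
      x ^ (4 * k + 1) * (x ^ 3 - x ^ 2 - x - 1) + (x ^ 3 + x ^ 2 + x - 1) := by
  simpa using congrArg (aeval x) (X_pow_four_sub_one_mul_Pm1 k)

theorem map_Pm1_zmod_two (k : ℕ) :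
    (Pm1 k).map (Int.castRingHom (ZMod 2)) = ∑ i ∈ Finset.range (4 * k + 1), X ^ i := by
  induction k with
  | zero => simp [Pm1]
  | succ k ih =>
    rw [Pm1, Finset.sum_range_succ, ← add_assoc, ← Pm1, Polynomial.map_add, ih,
      show 4 * (k + 1) + 1 = 4 * k + 1 + 4 by ring]
    simp only [Finset.sum_range_succ, Polynomial.map_mul, Polynomial.map_sub, Polynomial.map_pow,
      Polynomial.map_X, CharTwo.sub_eq_add]
    ring

theorem aeval_one_Pm1 {R : Type*} [CommRing R] (k : ℕ) : aeval (1 : R) (Pm1 k) = 1 - 2 * k := by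
  simp [Pm1]; ring

theorem aeval_neg_one_Pm1 {R : Type*} [CommRing R] (k : ℕ) :
    aeval (-1 : R) (Pm1 k) = 1 + 2 * k := by
  simp [Pm1, pow_mul]; norm_num [mul_comm]

theorem aeval_Pm1_eq_zero_of_isPrimitiveRoot_three {R : Type*} [CommRing R] [IsDomain R] {k : ℕ}
    (hk : k % 3 = 2) {γ : R} (hγ : IsPrimitiveRoot γ 3) : aeval γ (Pm1 k) = 0 := by
  have hγM : γ ^ (4 * k + 1) = 1 := (hγ.pow_eq_one_iff_dvd _).mpr (by omega)
  have hγ4 : γ ^ 4 - 1 ≠ 0 := by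
    rw [pow_succ, hγ.pow_eq_one, one_mul, sub_ne_zero]
    exact hγ.ne_one (by norm_num)
  refine (mul_eq_zero.mp ?_).resolve_left hγ4
  rw [pow_four_sub_one_mul_aeval_Pm1, hγM]
  linear_combination 2 * hγ.pow_eq_one

theorem sq_pow_eq_one_of_aeval_Pm1_eq_zero {K : Type*} [Field K] [CharZero K] {k : ℕ} {β : K}
    (hfin : IsOfFinOrder β) (hβ : aeval β (Pm1 k) = 0) : (β ^ (4 * k + 1)) ^ 2 = 1 := by
  have hdvd := map_dvd (Int.castRingHom (ZMod 2)) (cyclotomic_orderOf_dvd_of_aeval_eq_zero hfin hβ)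
  rw [map_cyclotomic, map_Pm1_zmod_two] at hdvd
  have hn := dvd_two_mul_of_cyclotomic_zmod_two_dvd_X_pow_sub_one hfin.orderOf_pos.ne'
    ⟨2 * k, by ring⟩ (hdvd.trans (Dvd.intro _ (geom_sum_mul X _)))
  rw [← pow_mul, mul_comm]
  exact orderOf_dvd_iff_pow_eq_one.mp hn

theorem isPrimitiveRoot_three_of_aeval_Pm1_eq_zero {K : Type*} [Field K] [CharZero K] {k : ℕ}
    {β : K} (hfin : IsOfFinOrder β) (hβ : aeval β (Pm1 k) = 0) :
    IsPrimitiveRoot β 3 ∧ k % 3 = 2 := by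
  have hH := pow_four_sub_one_mul_aeval_Pm1 k β
  rw [hβ, mul_zero] at hH
  rcases sq_eq_one_iff.mp (sq_pow_eq_one_of_aeval_Pm1_eq_zero hfin hβ) with hM | hM
  · have hβ3 : β ^ 3 = 1 := by
      rw [hM] at hH
      linear_combination -hH / 2
    have hβ1 : β ≠ 1 := by
      rintro rfl
      rw [aeval_one_Pm1, sub_eq_zero] at hβ
      norm_cast at hβ
      omega
    have hprim : IsPrimitiveRoot β 3 := orderOf_eq_prime hβ3 hβ1 ▸ IsPrimitiveRoot.orderOf β
    exact ⟨hprim, by have := (hprim.pow_eq_one_iff_dvd _).mp hM; omega⟩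
  · exfalso
    have hββ1 : β * (β + 1) = 0 := by
      rw [hM] at hH
      linear_combination -hH / 2
    rcases mul_eq_zero.mp hββ1 with h0 | h1
    · simp [h0] at hM
    · rw [eq_neg_of_add_eq_zero_left h1, aeval_neg_one_Pm1] at hβ
      norm_cast at hβ
      omega

theorem stmt_10_general (k : ℕ) :
    (k % 3 ≠ 2 → ∀ β : ℂ, Polynomial.aeval β (Pm1 k) = 0 →
      ¬ ∃ N : ℕ, 0 < N ∧ β ^ N = 1) ∧
    (k % 3 = 2 →
      Polynomial.aeval (Complex.exp (2 * Real.pi * Complex.I / 3)) (Pm1 k) = 0 ∧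
      Polynomial.aeval (Complex.exp (-(2 * Real.pi * Complex.I) / 3)) (Pm1 k) = 0 ∧
      ∀ β : ℂ, Polynomial.aeval β (Pm1 k) = 0 → (∃ N : ℕ, 0 < N ∧ β ^ N = 1) →
        β = Complex.exp (2 * Real.pi * Complex.I / 3) ∨
        β = Complex.exp (-(2 * Real.pi * Complex.I) / 3)) := by
  have hω : IsPrimitiveRoot (Complex.exp (2 * Real.pi * Complex.I / 3)) 3 := by
    simpa using Complex.isPrimitiveRoot_exp 3 (by norm_num)
  have hω' : Complex.exp (-(2 * Real.pi * Complex.I) / 3) =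
      Complex.exp (2 * Real.pi * Complex.I / 3) ^ 2 := by
    rw [neg_div, Complex.exp_neg]
    exact inv_eq_of_mul_eq_one_right (by rw [← pow_succ', hω.pow_eq_one])
  simp only [hω', ← isOfFinOrder_iff_pow_eq_one]
  refine ⟨fun hk β hβ hfin ↦ hk (isPrimitiveRoot_three_of_aeval_Pm1_eq_zero hfin hβ).2,
    fun hk ↦ ⟨aeval_Pm1_eq_zero_of_isPrimitiveRoot_three hk hω,
      aeval_Pm1_eq_zero_of_isPrimitiveRoot_three hk (hω.pow_of_coprime 2 (by norm_num)), ?_⟩⟩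
  exact fun β hβ hfin ↦
    hω.eq_or_eq_sq_of_three (isPrimitiveRoot_three_of_aeval_Pm1_eq_zero hfin hβ).1

/-- For every `k ≥ 1`: if `k ≢ 2 (mod 3)`, no complex root of `P_{k-1}`
is a root of unity; if `k ≡ 2 (mod 3)`, the only complex roots of `P_{k-1}` that are roots
of unity are the two primitive cube roots of unity `e^{±2πi/3}`. -/
theorem stmt_10 (k : ℕ) (hk : 1 ≤ k) :
    (k % 3 ≠ 2 → ∀ β : ℂ, Polynomial.aeval β (Pm1 k) = 0 →
      ¬ ∃ N : ℕ, 0 < N ∧ β ^ N = 1) ∧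
    (k % 3 = 2 →
      Polynomial.aeval (Complex.exp (2 * Real.pi * Complex.I / 3)) (Pm1 k) = 0 ∧
      Polynomial.aeval (Complex.exp (-(2 * Real.pi * Complex.I) / 3)) (Pm1 k) = 0 ∧
      ∀ β : ℂ, Polynomial.aeval β (Pm1 k) = 0 → (∃ N : ℕ, 0 < N ∧ β ^ N = 1) →
        β = Complex.exp (2 * Real.pi * Complex.I / 3) ∨
        β = Complex.exp (-(2 * Real.pi * Complex.I) / 3)) :=
  stmt_10_general k
end
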